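/- Let $\omega:\mathbb{R}\to\mathbb{R}$ and $\beta_1,\beta_2:\mathbb{R}\times\mathbb{R}\to\mathbb{R}$ be bounded functions, and suppose $u:\mathbb{R}\times\mathbb{R}\to\mathbb{R}$ is $C^1$ with bounded partial derivatives satisfying $\omega(I)\,\partial_\varphi u(I,\varphi)=\beta_1(I,\varphi)-\bar\beta(I)$ for a function $\bar\beta$. If $(I^\epsilon_t,\varphi^\epsilon_t)$ solves $\dot I^\epsilon=\beta_1(I^\epsilon,\varphi^\epsilon)$, $\dot\varphi^\epsilon=\epsilon^{-1}\omega(I^\epsilon)+\beta_2(I^\epsilon,\varphi^\epsilon)$ on $[0,T]$, then there is a constant $c>0$ (depending on $T$ and the bounds, but not on $\epsilon$) such that $\sup_{0\le t\le T}\big|\int_0^t [\beta_1(I^\epsilon_s,\varphi^\epsilon_s)-\bar\beta(I^\epsilon_s)]\,ds\big| \le c\,\epsilon$. -/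

import Mathlib

open Set intervalIntegral

/-- Averaging via the auxiliary equation: the oscillatory integral is O(ε). -/
theorem stmt0
    (T : ℝ) (hT : 0 < T)
    (ω : ℝ → ℝ) (β1 β2 : ℝ → ℝ → ℝ) (βbar : ℝ → ℝ)
    (u : ℝ × ℝ → ℝ) (Du : ℝ × ℝ → (ℝ × ℝ →L[ℝ] ℝ))
    (M : ℝ)
    (hω : ∀ I, |ω I| ≤ M)
    (hβ1 : ∀ I φ, |β1 I φ| ≤ M) (hβ2 : ∀ I φ, |β2 I φ| ≤ M)
    (hu : ∀ p, HasFDerivAt u (Du p) p)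
    (hub : ∀ p, |u p| ≤ M) (hDub : ∀ p, ‖Du p‖ ≤ M)
    (haux : ∀ I φ, ω I * Du (I, φ) (0, 1) = β1 I φ - βbar I)
    (I : ℝ → ℝ → ℝ) (φ : ℝ → ℝ → ℝ)
    (hI : ∀ ε > 0, ∀ t ∈ Icc (0:ℝ) T,
      HasDerivAt (I ε) (β1 (I ε t) (φ ε t)) t)
    (hφ : ∀ ε > 0, ∀ t ∈ Icc (0:ℝ) T,
      HasDerivAt (φ ε) (ε⁻¹ * ω (I ε t) + β2 (I ε t) (φ ε t)) t) :
    ∃ c > 0, ∀ ε > 0, ∀ t ∈ Icc (0:ℝ) T,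
      |∫ s in (0:ℝ)..t, (β1 (I ε s) (φ ε s) - βbar (I ε s))| ≤ c * ε := by
  have hM0 : (0:ℝ) ≤ M := le_trans (abs_nonneg _) (hω 0)
  refine ⟨2*M + T*M^2 + 1, by positivity, ?_⟩
  intro ε hε t ht
  obtain ⟨ht0, htT⟩ := ht
  set F : ℝ → ℝ := fun s => β1 (I ε s) (φ ε s) - βbar (I ε s) with hFdef
  by_cases hint : IntervalIntegrable F MeasureTheory.volume 0 t
  · -- main case
    set g : ℝ → ℝ := fun s => u (I ε s, φ ε s) with hgdef
    set g' : ℝ → ℝ := fun s =>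
      Du (I ε s, φ ε s) (β1 (I ε s) (φ ε s), ε⁻¹ * ω (I ε s) + β2 (I ε s) (φ ε s)) with hg'def
    set h : ℝ → ℝ := fun s =>
      Du (I ε s, φ ε s) (β1 (I ε s) (φ ε s), β2 (I ε s) (φ ε s)) with hhdef
    have key : ∀ s, g' s - h s = ε⁻¹ * F s := by
      intro s
      have hx := haux (I ε s) (φ ε s)
      have h1 : ((β1 (I ε s) (φ ε s), ε⁻¹ * ω (I ε s) + β2 (I ε s) (φ ε s)) : ℝ × ℝ)
          = (β1 (I ε s) (φ ε s), β2 (I ε s) (φ ε s)) + (ε⁻¹ * ω (I ε s)) • ((0:ℝ), (1:ℝ)) := by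
        simp [Prod.ext_iff]
        try ring
      have h2 : g' s = h s + (ε⁻¹ * ω (I ε s)) * Du (I ε s, φ ε s) ((0:ℝ), (1:ℝ)) := by
        rw [hg'def]
        simp only [h1, map_add, map_smul, smul_eq_mul]
        rfl
      rw [h2, hFdef]
      have : ε⁻¹ * ω (I ε s) * Du (I ε s, φ ε s) ((0:ℝ), (1:ℝ))
          = ε⁻¹ * (ω (I ε s) * Du (I ε s, φ ε s) ((0:ℝ), (1:ℝ))) := by ring
      rw [this, hx]
      ring
    have hsub : Icc (0:ℝ) t ⊆ Icc 0 T := Icc_subset_Icc le_rfl htT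
    have huIcc : uIcc (0:ℝ) t ⊆ Icc 0 T := by
      rw [uIcc_of_le ht0]; exact hsub
    have hg : ∀ s ∈ Icc (0:ℝ) T, HasDerivAt g (g' s) s := by
      intro s hs
      have := (hu (I ε s, φ ε s)).comp_hasDerivAt s ((hI ε hε s hs).prodMk (hφ ε hε s hs))
      exact this
    -- bound on g'
    have hεinv : (0:ℝ) ≤ ε⁻¹ := by positivity
    have hg'b : ∀ s, ‖g' s‖ ≤ M * (M + (ε⁻¹ * M + M)) := by
      intro s
      have h1 : ‖g' s‖ ≤ ‖Du (I ε s, φ ε s)‖ *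
          ‖((β1 (I ε s) (φ ε s), ε⁻¹ * ω (I ε s) + β2 (I ε s) (φ ε s)) : ℝ × ℝ)‖ :=
        (Du (I ε s, φ ε s)).le_opNorm _
      have h2 : ‖((β1 (I ε s) (φ ε s), ε⁻¹ * ω (I ε s) + β2 (I ε s) (φ ε s)) : ℝ × ℝ)‖
          ≤ M + (ε⁻¹ * M + M) := by
        rw [Prod.norm_def]
        apply max_le
        · simp only [Real.norm_eq_abs]
          have := hβ1 (I ε s) (φ ε s)
          nlinarith [hω (I ε s), hβ2 (I ε s) (φ ε s)]
        · simp only [Real.norm_eq_abs]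
          calc |ε⁻¹ * ω (I ε s) + β2 (I ε s) (φ ε s)|
              ≤ |ε⁻¹ * ω (I ε s)| + |β2 (I ε s) (φ ε s)| := abs_add_le _ _
            _ ≤ ε⁻¹ * M + M := by
                rw [abs_mul, abs_of_nonneg hεinv]
                have := hω (I ε s); have := hβ2 (I ε s) (φ ε s)
                nlinarith
            _ ≤ M + (ε⁻¹ * M + M) := by nlinarith
      calc ‖g' s‖ ≤ ‖Du (I ε s, φ ε s)‖ * _ := h1
        _ ≤ M * (M + (ε⁻¹ * M + M)) := by
            apply mul_le_mul (hDub _) h2 (norm_nonneg _)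
            exact hM0
    have hg'int : IntervalIntegrable g' MeasureTheory.volume 0 t := by
      rw [intervalIntegrable_iff]
      refine MeasureTheory.Integrable.mono'
        (g := fun _ => M * (M + (ε⁻¹ * M + M))) ?_ ?_ ?_
      · apply MeasureTheory.integrableOn_const
        · rw [uIoc_of_le ht0, Real.volume_Ioc]
          exact ENNReal.ofReal_ne_top
        · exact ENNReal.coe_ne_top
      · have hderiv : ∀ s ∈ uIoc (0:ℝ) t, deriv g s = g' s := by
          intro s hs
          rw [uIoc_of_le ht0] at hs
          exact (hg s ⟨le_of_lt hs.1, hs.2.trans htT⟩).deriv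
        refine ((measurable_deriv g).aestronglyMeasurable.restrict).congr ?_
        exact (MeasureTheory.ae_restrict_mem measurableSet_uIoc).mono hderiv
      · exact MeasureTheory.ae_of_all _ fun s => hg'b s
    have hh : IntervalIntegrable h MeasureTheory.volume 0 t := by
      have heq : h = fun s => g' s - ε⁻¹ * F s := funext fun s => by
        have := key s; linarith
      rw [heq]
      exact hg'int.sub (hint.const_mul _)
    have hFTC : ∫ s in (0:ℝ)..t, g' s = g t - g 0 :=
      integral_eq_sub_of_hasDerivAt (fun s hs => hg s (huIcc hs)) hg'int
    have hFeq : ∀ s, F s = ε * (g' s - h s) := by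
      intro s
      rw [key s]
      field_simp
    have hIeq : ∫ s in (0:ℝ)..t, F s = ε * ((g t - g 0) - ∫ s in (0:ℝ)..t, h s) := by
      calc ∫ s in (0:ℝ)..t, F s = ∫ s in (0:ℝ)..t, ε * (g' s - h s) := by
            simp_rw [hFeq]
        _ = ε * ∫ s in (0:ℝ)..t, (g' s - h s) := integral_const_mul _ _
        _ = ε * ((∫ s in (0:ℝ)..t, g' s) - ∫ s in (0:ℝ)..t, h s) := by
            rw [integral_sub hg'int hh]
        _ = ε * ((g t - g 0) - ∫ s in (0:ℝ)..t, h s) := by rw [hFTC]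
    have hhb : |∫ s in (0:ℝ)..t, h s| ≤ M * M * |t - 0| := by
      rw [← Real.norm_eq_abs]
      apply norm_integral_le_of_norm_le_const
      intro s _
      calc ‖h s‖ ≤ ‖Du (I ε s, φ ε s)‖ *
            ‖((β1 (I ε s) (φ ε s), β2 (I ε s) (φ ε s)) : ℝ × ℝ)‖ :=
          (Du (I ε s, φ ε s)).le_opNorm _
        _ ≤ M * M := by
            apply mul_le_mul (hDub _) ?_ (norm_nonneg _) hM0
            rw [Prod.norm_def]
            exact max_le (hβ1 _ _) (hβ2 _ _)
    have hgb : |g t - g 0| ≤ 2 * M := by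
      calc |g t - g 0| ≤ |g t| + |g 0| := abs_sub _ _
        _ ≤ 2 * M := by have := hub (I ε t, φ ε t); have := hub (I ε 0, φ ε 0); linarith
    rw [hIeq, abs_mul, abs_of_pos hε]
    have habs : |(g t - g 0) - ∫ s in (0:ℝ)..t, h s| ≤ 2*M + M*M*T := by
      have h1 : |∫ s in (0:ℝ)..t, h s| ≤ M * M * T := by
        refine hhb.trans ?_
        have : |t - 0| = t := by rw [sub_zero, abs_of_nonneg ht0]
        rw [this]
        nlinarith
      calc |(g t - g 0) - ∫ s in (0:ℝ)..t, h s|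
          ≤ |g t - g 0| + |∫ s in (0:ℝ)..t, h s| := abs_sub _ _
        _ ≤ 2*M + M*M*T := by linarith
    calc ε * |(g t - g 0) - ∫ s in (0:ℝ)..t, h s| ≤ ε * (2*M + M*M*T) := by
          apply mul_le_mul_of_nonneg_left habs (le_of_lt hε)
      _ ≤ (2*M + T*M^2 + 1) * ε := by nlinarith
  · rw [integral_undef hint]
    simp only [abs_zero]
    positivity
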